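/- arXiv:1305.1014 — 5 statements merged into one kernel-verified Lean document; each statement's English description precedes it below -/
import Mathlib

section
/- (Positivity of the mass parameter for spatially periodic time-symmetric data.) Let n ≥ 3 be an integer, ℓ > 0, β ∈ ℝ, m ∈ ℝ. If the Birmingham metric function f(r) = β − 2m/r^{n−2} − r²/ℓ² has at least two distinct zeros in (0,∞), then m > 0 and β > 0 (so β = 1 when β is normalized to lie in {0, ±1}). -/
lemma birmingham_aux (k : ℕ) (hk : 1 ≤ k) (ℓ β m r₁ r₂ : ℝ) (hℓ : 0 < ℓ)
    (h1 : 0 < r₁) (h12 : r₁ < r₂)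
    (e1 : β - 2 * m / r₁ ^ k - r₁ ^ 2 / ℓ ^ 2 = 0)
    (e2 : β - 2 * m / r₂ ^ k - r₂ ^ 2 / ℓ ^ 2 = 0) :
    0 < m ∧ 0 < β := by
  have h2 : 0 < r₂ := h1.trans h12
  have hp1 : 0 < r₁ ^ k := pow_pos h1 k
  have hp2 : 0 < r₂ ^ k := pow_pos h2 k
  have hpk : r₁ ^ k < r₂ ^ k := pow_lt_pow_left₀ h12 h1.le (by omega)
  have hℓ2 : 0 < ℓ ^ 2 := pow_pos hℓ 2
  have hr2 : r₁ ^ 2 < r₂ ^ 2 := pow_lt_pow_left₀ h12 h1.le (by norm_num)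
  have hdiff : 2 * m / r₁ ^ k - 2 * m / r₂ ^ k = (r₂ ^ 2 - r₁ ^ 2) / ℓ ^ 2 := by
    have := sub_eq_zero.mp (sub_eq_zero.mpr (e1.trans e2.symm))
    field_simp at this ⊢
    nlinarith [this]
  have hpos : 0 < 2 * m / r₁ ^ k - 2 * m / r₂ ^ k := by
    rw [hdiff]
    exact div_pos (by linarith) hℓ2
  have hm : 0 < m := by
    rw [div_sub_div _ _ hp1.ne' hp2.ne'] at hpos
    have hnum : 0 < 2 * m * r₂ ^ k - r₁ ^ k * (2 * m) :=
      (div_pos_iff.mp hpos).resolve_right (fun h => absurd (mul_pos hp1 hp2) (by linarith [h.2])) |>.1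
    nlinarith
  refine ⟨hm, ?_⟩
  have : β = 2 * m / r₁ ^ k + r₁ ^ 2 / ℓ ^ 2 := by linarith
  rw [this]
  positivity

/-- Positivity of the mass parameter for spatially periodic time-symmetric data:
if the Birmingham metric function `f(r) = β − 2m/r^(n−2) − r²/ℓ²` has at least two
distinct zeros in `(0,∞)`, then `m > 0` and `β > 0`. -/
theorem birmingham_positive_mass (n : ℕ) (hn : 3 ≤ n) (ℓ β m : ℝ) (hℓ : 0 < ℓ)
    (hzeros : ∃ r₁ r₂ : ℝ, 0 < r₁ ∧ 0 < r₂ ∧ r₁ ≠ r₂ ∧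
      β - 2 * m / r₁ ^ (n - 2) - r₁ ^ 2 / ℓ ^ 2 = 0 ∧
      β - 2 * m / r₂ ^ (n - 2) - r₂ ^ 2 / ℓ ^ 2 = 0) :
    0 < m ∧ 0 < β := by
  obtain ⟨r₁, r₂, h1, h2, hne, e1, e2⟩ := hzeros
  have hk : 1 ≤ n - 2 := by omega
  rcases hne.lt_or_gt with h | h
  · exact birmingham_aux (n - 2) hk ℓ β m r₁ r₂ hℓ h1 h e1 e2
  · exact birmingham_aux (n - 2) hk ℓ β m r₂ r₁ hℓ h2 h e2 e1
end

section
/- Let n ≥ 3 be an integer, ℓ > 0, m > 0, and β = 1. If the Birmingham metric function f(r) = 1 − 2m/r^{n−2} − r²/ℓ² has a zero in (0,∞), then m ≤ (ℓ^{n−2}/n)·(1 − 2/n)^{n/2 − 1}. -/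
/-!
A zero `r` of `f` gives `2m = r^(n-2) (1 - r²/ℓ²) = ℓ^(n-2) x^a (1 - x)` with `x = (r/ℓ)²` and
`a = n/2 - 1`. By weighted AM-GM with weights `a/(a+1)` and `1/(a+1)`, the function
`x^a (1 - x)` is maximised on `[0, ∞)` at `x = a/(a+1) = 1 - 2/n`, where it equals
`(1 - 2/n)^a · 2/n`.
-/

namespace Real

theorem rpow_mul_one_sub_le {a x : ℝ} (ha : 0 < a) (hx : 0 ≤ x) :
    x ^ a * (1 - x) ≤ (a / (a + 1)) ^ a / (a + 1) := by
  have hc : 0 < a / (a + 1) := by positivity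
  rcases le_or_gt x 1 with hx1 | hx1
  swap
  · exact (mul_nonpos_of_nonneg_of_nonpos (by positivity) (by linarith)).trans (by positivity)
  set c := a / (a + 1)
  set d := 1 / (a + 1)
  have hd : 0 < d := by positivity
  have hcd : c + d = 1 := by simp only [c, d]; field_simp
  have hp : 0 ≤ x / c := by positivity
  have hq : 0 ≤ (1 - x) / d := div_nonneg (by linarith) hd.le
  -- AM-GM at the points `x / c` and `(1 - x) / d`, whose weighted mean is `1`
  have hamgm : (x / c) ^ c * ((1 - x) / d) ^ d ≤ 1 :=
    (geom_mean_le_arith_mean2_weighted hc.le hd.le hp hq hcd).trans_eq <| by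
      rw [mul_div_cancel₀ _ hc.ne', mul_div_cancel₀ _ hd.ne']; ring
  have hpow : ((x / c) ^ c * ((1 - x) / d) ^ d) ^ (a + 1) = (x / c) ^ a * ((1 - x) / d) := by
    rw [mul_rpow (by positivity) (by positivity), ← rpow_mul hp, ← rpow_mul hq]
    simp only [c, d]
    field_simp
    rw [rpow_one]
    ring
  have hle : (x / c) ^ a * ((1 - x) / d) ≤ 1 :=
    hpow ▸ rpow_le_one (by positivity) hamgm (by positivity)
  rw [div_rpow hx hc.le, div_mul_div_comm, div_le_one (by positivity)] at hle
  simpa only [d, div_eq_mul_one_div (c ^ a)] using hle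

theorem sq_rpow_div_two_sub_one {y : ℝ} (hy : 0 ≤ y) {n : ℕ} (hn : 2 ≤ n) :
    (y ^ 2) ^ ((n : ℝ) / 2 - 1) = y ^ (n - 2) := by
  rw [← rpow_natCast_mul hy, ← rpow_natCast, Nat.cast_sub hn]
  congr 1
  push_cast
  ring

end Real

theorem birmingham_mass_bound_general (n : ℕ) (hn : 3 ≤ n) (ℓ m : ℝ)
    (hℓ : 0 < ℓ)
    (hzero : ∃ r : ℝ, 0 < r ∧ 1 - 2 * m / r ^ (n - 2) - r ^ 2 / ℓ ^ 2 = 0) :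
    m ≤ (ℓ ^ (n - 2) / (n : ℝ)) * (1 - 2 / (n : ℝ)) ^ ((n : ℝ) / 2 - 1) := by
  obtain ⟨r, hr, hf⟩ := hzero
  have hn' : (3 : ℝ) ≤ n := by exact_mod_cast hn
  set a : ℝ := (n : ℝ) / 2 - 1
  have ha : a + 1 = n / 2 := by ring
  have hmass : m = ℓ ^ (n - 2) / 2 * ((r / ℓ) ^ 2) ^ a * (1 - (r / ℓ) ^ 2) := by
    rw [Real.sq_rpow_div_two_sub_one (by positivity) (by omega), div_pow, div_pow]
    field_simp at hf ⊢
    linarith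
  have hmax := Real.rpow_mul_one_sub_le (a := a) (by linarith) (sq_nonneg (r / ℓ))
  have hc : a / (a + 1) = 1 - 2 / n := by rw [ha]; field_simp; ring
  calc m = ℓ ^ (n - 2) / 2 * (((r / ℓ) ^ 2) ^ a * (1 - (r / ℓ) ^ 2)) := by rw [hmass, mul_assoc]
    _ ≤ ℓ ^ (n - 2) / 2 * ((1 - 2 / n) ^ a / (a + 1)) := by rw [← hc]; gcongr
    _ = ℓ ^ (n - 2) / n * (1 - 2 / n) ^ a := by rw [ha]; field_simp

/-- For `β = 1` and `m > 0`: if the Birmingham metric function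
`f(r) = 1 − 2m/r^(n−2) − r²/ℓ²` has a zero in `(0,∞)`, then
`m ≤ (ℓ^(n−2)/n)·(1 − 2/n)^(n/2 − 1)`. -/
theorem birmingham_mass_bound (n : ℕ) (hn : 3 ≤ n) (ℓ m : ℝ)
    (hℓ : 0 < ℓ) (hm : 0 < m)
    (hzero : ∃ r : ℝ, 0 < r ∧ 1 - 2 * m / r ^ (n - 2) - r ^ 2 / ℓ ^ 2 = 0) :
    m ≤ (ℓ ^ (n - 2) / (n : ℝ)) * (1 - 2 / (n : ℝ)) ^ ((n : ℝ) / 2 - 1) :=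
  birmingham_mass_bound_general n hn ℓ m hℓ hzero
end

section
/- Let n ≥ 3 be an integer, ℓ > 0, β = 1, and 0 < m < (ℓ^{n−2}/n)·(1 − 2/n)^{n/2 − 1}. Then the Birmingham metric function f(r) = 1 − 2m/r^{n−2} − r²/ℓ² has exactly two zeros r₀⁽¹⁾ < r₀⁽²⁾ in (0,∞), and both are first-order: f'(r₀⁽¹⁾) > 0 and f'(r₀⁽²⁾) < 0. -/
/-!
On `(0, ∞)` the function `f = birmingham n m ℓ` is concave, being `1` minus the convex functions
`2m r^{-(n-2)}` and `r²/ℓ²`. At `s = ℓ √(1 - 2/n)` one computes `f s = 2/n - 2m / s^(n-2)`, so the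
bound on `m` says exactly that `f s > 0`; since `f < 0` near `0` and at `ℓ > s`, the intermediate
value theorem gives a zero on each side of `s`. Concavity then does the rest: between a zero and
`s` the function stays positive, so there is no second zero on either side, and the secant from
each zero to `s` has positive (resp. negative) slope, which bounds the derivative there.
-/

open Set Topology

namespace ConcaveOn

variable {S : Set ℝ} {f : ℝ → ℝ} {x y z : ℝ}

theorem pos_of_nonneg_of_pos (hf : ConcaveOn ℝ S f) (hx : x ∈ S) (hz : z ∈ S)
    (hxy : x < y) (hyz : y < z) (hfx : 0 ≤ f x) (hfz : 0 < f z) : 0 < f y := by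
  by_contra! hfy
  have hslope := hf.slope_anti_adjacent hx hz hxy hyz
  have hleft : 0 < (f z - f y) / (z - y) := div_pos (by linarith) (by linarith)
  have hright : (f y - f x) / (y - x) ≤ 0 :=
    div_nonpos_of_nonpos_of_nonneg (by linarith) (by linarith)
  linarith

theorem pos_of_pos_of_nonneg (hf : ConcaveOn ℝ S f) (hx : x ∈ S) (hz : z ∈ S)
    (hxy : x < y) (hyz : y < z) (hfx : 0 < f x) (hfz : 0 ≤ f z) : 0 < f y := by
  by_contra! hfy
  have hslope := hf.slope_anti_adjacent hx hz hxy hyz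
  have hleft : 0 ≤ (f z - f y) / (z - y) := div_nonneg (by linarith) (by linarith)
  have hright : (f y - f x) / (y - x) < 0 := div_neg_of_neg_of_pos (by linarith) (by linarith)
  linarith

theorem eq_of_apply_eq_zero_of_lt (hf : ConcaveOn ℝ S f) (hx : x ∈ S) (hy : y ∈ S) (hz : z ∈ S)
    (hxz : x < z) (hyz : y < z) (hfz : 0 < f z) (hfx : f x = 0) (hfy : f y = 0) : x = y := by
  rcases lt_trichotomy x y with hxy | hxy | hyx
  · exact absurd hfy (hf.pos_of_nonneg_of_pos hx hz hxy hyz hfx.ge hfz).ne'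
  · exact hxy
  · exact absurd hfx (hf.pos_of_nonneg_of_pos hy hz hyx hxz hfy.ge hfz).ne'

theorem eq_of_apply_eq_zero_of_gt (hf : ConcaveOn ℝ S f) (hx : x ∈ S) (hy : y ∈ S) (hz : z ∈ S)
    (hzx : z < x) (hzy : z < y) (hfz : 0 < f z) (hfx : f x = 0) (hfy : f y = 0) : x = y := by
  rcases lt_trichotomy x y with hxy | hxy | hyx
  · exact absurd hfx (hf.pos_of_pos_of_nonneg hz hy hzx hxy hfz hfy.ge).ne'
  · exact hxy
  · exact absurd hfy (hf.pos_of_pos_of_nonneg hz hx hzy hyx hfz hfx.ge).ne'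

theorem deriv_pos_of_apply_eq_zero (hf : ConcaveOn ℝ S f) (hx : x ∈ S) (hy : y ∈ S)
    (hxy : x < y) (hfx : f x = 0) (hfy : 0 < f y) (hd : DifferentiableAt ℝ f x) :
    0 < deriv f x := by
  refine lt_of_lt_of_le ?_ (hf.slope_le_deriv hx hy hxy hd)
  rw [slope_def_field, hfx, sub_zero]
  exact div_pos hfy (sub_pos.2 hxy)

theorem deriv_neg_of_apply_eq_zero (hf : ConcaveOn ℝ S f) (hx : x ∈ S) (hy : y ∈ S)
    (hxy : x < y) (hfx : 0 < f x) (hfy : f y = 0) (hd : DifferentiableAt ℝ f y) :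
    deriv f y < 0 := by
  refine lt_of_le_of_lt (hf.deriv_le_slope hx hy hxy hd) ?_
  rw [slope_def_field, hfy, zero_sub]
  exact div_neg_of_neg_of_pos (neg_neg_of_pos hfx) (sub_pos.2 hxy)

theorem exists_two_zeros (hf : ConcaveOn ℝ S f) (hfc : ContinuousOn f S) {a s b : ℝ}
    (ha : a ∈ S) (hb : b ∈ S) (has : a < s) (hsb : s < b)
    (hfa : f a < 0) (hfs : 0 < f s) (hfb : f b < 0) :
    ∃ x y, a < x ∧ x < s ∧ s < y ∧ y < b ∧ f x = 0 ∧ f y = 0 ∧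
      ∀ z ∈ S, f z = 0 → z = x ∨ z = y := by
  have hS := hf.1.ordConnected
  have hs : s ∈ S := hS.out ha hb ⟨has.le, hsb.le⟩
  obtain ⟨x, ⟨hax, hxs⟩, hfx⟩ :=
    intermediate_value_Ioo has.le (hfc.mono (hS.out ha hs)) ⟨hfa, hfs⟩
  obtain ⟨y, ⟨hsy, hyb⟩, hfy⟩ :=
    intermediate_value_Ioo' hsb.le (hfc.mono (hS.out hs hb)) ⟨hfb, hfs⟩
  have hxS : x ∈ S := hS.out ha hs ⟨hax.le, hxs.le⟩
  have hyS : y ∈ S := hS.out hs hb ⟨hsy.le, hyb.le⟩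
  refine ⟨x, y, hax, hxs, hsy, hyb, hfx, hfy, fun z hz hfz => ?_⟩
  rcases lt_trichotomy z s with hzs | rfl | hsz
  · exact .inl (hf.eq_of_apply_eq_zero_of_lt hz hxS hs hzs hxs hfs hfz hfx)
  · exact absurd hfz hfs.ne'
  · exact .inr (hf.eq_of_apply_eq_zero_of_gt hz hyS hs hsz hsy hfs hfz hfy)

end ConcaveOn

noncomputable def birmingham (n : ℕ) (m ℓ r : ℝ) : ℝ := 1 - 2 * m / r ^ (n - 2) - r ^ 2 / ℓ ^ 2

theorem concaveOn_birmingham (n : ℕ) {m : ℝ} (ℓ : ℝ) (hm : 0 ≤ m) :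
    ConcaveOn ℝ (Ioi 0) (birmingham n m ℓ) := by
  have hinv : ConvexOn ℝ (Ioi 0) fun r : ℝ => (2 * m) • r ^ (-((n - 2 : ℕ) : ℤ)) :=
    (convexOn_zpow _).smul (by positivity)
  have hsq : ConvexOn ℝ (Ioi 0) fun r : ℝ => (ℓ ^ 2)⁻¹ • r ^ 2 :=
    ((Even.convexOn_pow even_two).subset (subset_univ _) (convex_Ioi 0)).smul (by positivity)
  have hf : birmingham n m ℓ = (fun _ => 1) - (fun r : ℝ => (2 * m) • r ^ (-((n - 2 : ℕ) : ℤ)))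
      - fun r : ℝ => (ℓ ^ 2)⁻¹ • r ^ 2 := by
    funext r
    simp only [birmingham, Pi.sub_apply, smul_eq_mul, zpow_neg, zpow_natCast]
    ring
  rw [hf]
  exact ((concaveOn_const 1 (convex_Ioi 0)).sub hinv).sub hsq

theorem differentiableAt_birmingham (n : ℕ) (m ℓ : ℝ) {r : ℝ} (hr : r ≠ 0) :
    DifferentiableAt ℝ (birmingham n m ℓ) r := by
  unfold birmingham
  fun_prop (disch := exact pow_ne_zero _ hr)

theorem continuousOn_birmingham (n : ℕ) (m ℓ : ℝ) : ContinuousOn (birmingham n m ℓ) (Ioi 0) :=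
  fun _ hr => (differentiableAt_birmingham n m ℓ (ne_of_gt hr)).continuousAt.continuousWithinAt

theorem exists_pos_lt_and_pow_lt {k : ℕ} (hk : k ≠ 0) {δ ε : ℝ} (hδ : 0 < δ) (hε : 0 < ε) :
    ∃ a : ℝ, 0 < a ∧ a < δ ∧ a ^ k < ε := by
  have hpos : ∀ᶠ a in 𝓝[>] (0 : ℝ), 0 < a := self_mem_nhdsWithin
  have hlt : ∀ᶠ a in 𝓝[>] (0 : ℝ), a < δ := nhdsWithin_le_nhds (eventually_lt_nhds hδ)
  have hpow : ∀ᶠ a in 𝓝[>] (0 : ℝ), a ^ k < ε := nhdsWithin_le_nhds <|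
    (continuous_pow k).continuousAt.eventually_lt continuousAt_const (by simpa [zero_pow hk])
  exact (hpos.and (hlt.and hpow)).exists

section birmingham

variable {n : ℕ} {m ℓ r : ℝ}

theorem birmingham_neg_of_pow_le (hℓ : ℓ ≠ 0) (hr : 0 < r) (hrm : r ^ (n - 2) ≤ 2 * m) :
    birmingham n m ℓ r < 0 := by
  have hmass : 1 ≤ 2 * m / r ^ (n - 2) := (one_le_div (by positivity)).2 hrm
  have hsq : 0 < r ^ 2 / ℓ ^ 2 := by positivity
  unfold birmingham
  linarith

theorem birmingham_neg_of_le (hm : 0 < m) (hℓ : 0 < ℓ) (hℓr : ℓ ≤ r) :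
    birmingham n m ℓ r < 0 := by
  have hmass : 0 < 2 * m / r ^ (n - 2) := by have := hℓ.trans_le hℓr; positivity
  have hsq : 1 ≤ r ^ 2 / ℓ ^ 2 := (one_le_div (by positivity)).2 (by gcongr)
  unfold birmingham
  linarith

theorem Real.rpow_natCast_div_two_sub_one_eq_sqrt_pow {q : ℝ} (hq : 0 ≤ q) (hn : 2 ≤ n) :
    q ^ ((n : ℝ) / 2 - 1) = √q ^ (n - 2) := by
  rw [Real.sqrt_eq_rpow, ← Real.rpow_natCast, ← Real.rpow_mul hq, Nat.cast_sub hn]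
  ring_nf

theorem one_sub_two_div_pos (hn : 3 ≤ n) : 0 < 1 - 2 / (n : ℝ) := by
  rw [sub_pos, div_lt_one (by positivity)]
  exact_mod_cast (by omega : 2 < n)

theorem sqrt_one_sub_two_div_lt_one (hn : n ≠ 0) : √(1 - 2 / (n : ℝ)) < 1 := by
  rw [Real.sqrt_lt' one_pos, one_pow]
  exact sub_lt_self 1 (div_pos two_pos (Nat.cast_pos.2 (Nat.pos_of_ne_zero hn)))

theorem birmingham_pos_of_lt (hn : 3 ≤ n) (hℓ : 0 < ℓ)
    (hm : m < (ℓ ^ (n - 2) / (n : ℝ)) * (1 - 2 / (n : ℝ)) ^ ((n : ℝ) / 2 - 1)) :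
    0 < birmingham n m ℓ (ℓ * √(1 - 2 / n)) := by
  set q : ℝ := 1 - 2 / n with hq
  have hn0 : (0 : ℝ) < n := by positivity
  have hq0 : 0 < q := one_sub_two_div_pos hn
  rw [Real.rpow_natCast_div_two_sub_one_eq_sqrt_pow hq0.le (by omega)] at hm
  have hP : 0 < ℓ ^ (n - 2) * √q ^ (n - 2) := by positivity
  have hmass : 2 * m / (ℓ * √q) ^ (n - 2) < 2 / n := by
    rw [mul_pow, div_lt_div_iff₀ hP hn0]
    rw [div_mul_eq_mul_div, lt_div_iff₀ hn0] at hm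
    linarith
  have hsq : (ℓ * √q) ^ 2 / ℓ ^ 2 = q := by
    rw [mul_pow, Real.sq_sqrt hq0.le]
    field_simp
  unfold birmingham
  rw [hsq, hq]
  linarith

end birmingham

/-- For `β = 1`, `ℓ > 0` and `0 < m < (ℓ^(n−2)/n)·(1 − 2/n)^(n/2 − 1)`, the
Birmingham metric function `f(r) = 1 − 2m/r^(n−2) − r²/ℓ²` has exactly two zeros
`r₀⁽¹⁾ < r₀⁽²⁾` in `(0,∞)`, both first-order: `f'(r₀⁽¹⁾) > 0` and `f'(r₀⁽²⁾) < 0`. -/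
theorem birmingham_two_zeros (n : ℕ) (hn : 3 ≤ n) (ℓ m : ℝ) (hℓ : 0 < ℓ)
    (hm : 0 < m)
    (hm' : m < (ℓ ^ (n - 2) / (n : ℝ)) * (1 - 2 / (n : ℝ)) ^ ((n : ℝ) / 2 - 1)) :
    ∃ r₁ r₂ : ℝ, 0 < r₁ ∧ r₁ < r₂ ∧
      (1 - 2 * m / r₁ ^ (n - 2) - r₁ ^ 2 / ℓ ^ 2 = 0) ∧
      (1 - 2 * m / r₂ ^ (n - 2) - r₂ ^ 2 / ℓ ^ 2 = 0) ∧
      (∀ r : ℝ, 0 < r → 1 - 2 * m / r ^ (n - 2) - r ^ 2 / ℓ ^ 2 = 0 →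
        r = r₁ ∨ r = r₂) ∧
      0 < deriv (fun r : ℝ => 1 - 2 * m / r ^ (n - 2) - r ^ 2 / ℓ ^ 2) r₁ ∧
      deriv (fun r : ℝ => 1 - 2 * m / r ^ (n - 2) - r ^ 2 / ℓ ^ 2) r₂ < 0 := by
  set s := ℓ * √(1 - 2 / n)
  have hfs := birmingham_pos_of_lt hn hℓ hm'
  have hs : 0 < s := mul_pos hℓ (Real.sqrt_pos.2 (one_sub_two_div_pos hn))
  have hsℓ : s < ℓ := mul_lt_of_lt_one_right hℓ (sqrt_one_sub_two_div_lt_one (by omega))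
  have hconc := concaveOn_birmingham n ℓ hm.le
  obtain ⟨a, ha, has, ham⟩ :=
    exists_pos_lt_and_pow_lt (by omega : n - 2 ≠ 0) hs (by positivity : 0 < 2 * m)
  obtain ⟨r₁, r₂, har₁, hr₁s, hsr₂, -, hf₁, hf₂, honly⟩ := hconc.exists_two_zeros
    (continuousOn_birmingham n m ℓ) ha (hℓ : ℓ ∈ Ioi 0) has hsℓ
    (birmingham_neg_of_pow_le hℓ.ne' ha ham.le) hfs (birmingham_neg_of_le hm hℓ le_rfl)
  have hr₁ : 0 < r₁ := ha.trans har₁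
  have hr₂ : 0 < r₂ := hs.trans hsr₂
  refine ⟨r₁, r₂, hr₁, hr₁s.trans hsr₂, hf₁, hf₂, honly, ?_, ?_⟩
  · exact hconc.deriv_pos_of_apply_eq_zero hr₁ hs hr₁s hf₁ hfs
      (differentiableAt_birmingham n m ℓ hr₁.ne')
  · exact hconc.deriv_neg_of_apply_eq_zero hs hr₂ hsr₂ hfs hf₂
      (differentiableAt_birmingham n m ℓ hr₂.ne')
end

section
/- Let n ≥ 3 be an integer, ℓ > 0, m ∈ ℝ and β ∈ {0, 1, −1}. Then the Birmingham metric function f(r) = β − 2m/r^{n−2} − r²/ℓ² satisfies f ≤ 0 on (0,∞) with f vanishing at precisely one point of (0,∞) if and only if β = 1 and m = r₀ⁿ/((n−2)ℓ²) where r₀ = √((n−2)/n)·ℓ; and in that case the unique zero of f is r₀. -/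
open Set

noncomputable def gB (n : ℕ) (ℓ : ℝ) (r : ℝ) : ℝ := r ^ (n - 2) - r ^ n / ℓ ^ 2

lemma gB_hasDerivAt (n : ℕ) (hn : 3 ≤ n) (ℓ : ℝ) (r : ℝ) :
    HasDerivAt (gB n ℓ) (((n : ℝ) - 2) * r ^ (n - 3) - (n : ℝ) * r ^ (n - 1) / ℓ ^ 2) r := by
  have h1 := hasDerivAt_pow (n - 2) r
  have h2 := (hasDerivAt_pow n r).div_const (ℓ ^ 2)
  have h := h1.sub h2
  have e1 : n - 2 - 1 = n - 3 := by omega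
  have e2 : ((n - 2 : ℕ) : ℝ) = (n : ℝ) - 2 := by
    have : (2 : ℕ) ≤ n := by omega
    push_cast [this]; ring
  rw [e1, e2] at h
  exact h

lemma gB_max (n : ℕ) (hn : 3 ≤ n) (ℓ : ℝ) (hℓ : 0 < ℓ) :
    ∀ r : ℝ, 0 < r → r ≠ Real.sqrt (((n : ℝ) - 2) / n) * ℓ →
      gB n ℓ r < gB n ℓ (Real.sqrt (((n : ℝ) - 2) / n) * ℓ) := by
  have hn2 : (0 : ℝ) < (n : ℝ) - 2 := by
    have : (3 : ℝ) ≤ (n : ℝ) := by exact_mod_cast hn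
    linarith
  have hnpos : (0 : ℝ) < (n : ℝ) := by linarith
  set r₀ := Real.sqrt (((n : ℝ) - 2) / n) * ℓ with hr₀def
  have hr₀pos : 0 < r₀ := mul_pos (Real.sqrt_pos.2 (div_pos hn2 hnpos)) hℓ
  have hr₀sq : r₀ ^ 2 = ((n : ℝ) - 2) / n * ℓ ^ 2 := by
    rw [hr₀def, mul_pow, Real.sq_sqrt (le_of_lt (div_pos hn2 hnpos))]
  have hcont : Continuous (gB n ℓ) := by
    unfold gB; exact (continuous_pow _).sub ((continuous_pow n).div_const _)
  have hderivval : ∀ r : ℝ, deriv (gB n ℓ) r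
      = ((n : ℝ) - 2) * r ^ (n - 3) - (n : ℝ) * r ^ (n - 1) / ℓ ^ 2 :=
    fun r => (gB_hasDerivAt n hn ℓ r).deriv
  have hfact : ∀ r : ℝ, ((n : ℝ) - 2) * r ^ (n - 3) - (n : ℝ) * r ^ (n - 1) / ℓ ^ 2
      = r ^ (n - 3) * (((n : ℝ) - 2) - (n : ℝ) * r ^ 2 / ℓ ^ 2) := by
    intro r
    have e : n - 1 = (n - 3) + 2 := by omega
    rw [e, pow_add]; ring
  have hval : (n : ℝ) * r₀ ^ 2 / ℓ ^ 2 = (n : ℝ) - 2 := by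
    rw [hr₀sq]; field_simp
  have hmono : StrictMonoOn (gB n ℓ) (Icc 0 r₀) := by
    apply strictMonoOn_of_deriv_pos (convex_Icc _ _) hcont.continuousOn
    intro r hr
    rw [interior_Icc] at hr
    rw [hderivval, hfact]
    have hrpos : 0 < r := hr.1
    have hrsq : r ^ 2 < r₀ ^ 2 := by nlinarith [hr.2]
    have h2 : (n : ℝ) * r ^ 2 / ℓ ^ 2 < (n : ℝ) - 2 := by
      rw [← hval]; gcongr
    exact mul_pos (pow_pos hrpos _) (by linarith)
  have hanti : StrictAntiOn (gB n ℓ) (Ici r₀) := by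
    apply strictAntiOn_of_deriv_neg (convex_Ici _) hcont.continuousOn
    intro r hr
    rw [interior_Ici] at hr
    rw [hderivval, hfact]
    have hrpos : 0 < r := lt_trans hr₀pos hr
    have hrsq : r₀ ^ 2 < r ^ 2 := by nlinarith [mul_self_lt_mul_self hr₀pos.le (mem_Ioi.1 hr)]
    have h2 : (n : ℝ) - 2 < (n : ℝ) * r ^ 2 / ℓ ^ 2 := by
      rw [← hval]; gcongr
    have := pow_pos hrpos (n - 3)
    nlinarith
  intro r hr hne
  rcases lt_or_gt_of_ne hne with h | h
  · exact hmono ⟨hr.le, h.le⟩ ⟨hr₀pos.le, le_refl _⟩ h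
  · exact hanti (self_mem_Ici) h.le h

set_option maxHeartbeats 800000 in

/-- Extreme ("Nariai-type") case: for `β ∈ {0, 1, −1}`, the Birmingham metric
function `f(r) = β − 2m/r^(n−2) − r²/ℓ²` satisfies `f ≤ 0` on `(0,∞)` with `f`
vanishing at precisely one point of `(0,∞)` if and only if `β = 1` and
`m = r₀ⁿ/((n−2)ℓ²)` with `r₀ = √((n−2)/n)·ℓ`; in that case the unique zero is `r₀`. -/
theorem birmingham_extreme_case (n : ℕ) (hn : 3 ≤ n) (ℓ β m : ℝ) (hℓ : 0 < ℓ)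
    (hβ : β = 0 ∨ β = 1 ∨ β = -1) :
    (((∀ r : ℝ, 0 < r → β - 2 * m / r ^ (n - 2) - r ^ 2 / ℓ ^ 2 ≤ 0) ∧
        (∃! r : ℝ, 0 < r ∧ β - 2 * m / r ^ (n - 2) - r ^ 2 / ℓ ^ 2 = 0)) ↔
      (β = 1 ∧ m = (Real.sqrt (((n : ℝ) - 2) / n) * ℓ) ^ n / (((n : ℝ) - 2) * ℓ ^ 2))) ∧
    ((β = 1 ∧ m = (Real.sqrt (((n : ℝ) - 2) / n) * ℓ) ^ n / (((n : ℝ) - 2) * ℓ ^ 2)) →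
      ∀ r : ℝ, 0 < r →
        (β - 2 * m / r ^ (n - 2) - r ^ 2 / ℓ ^ 2 = 0 ↔
          r = Real.sqrt (((n : ℝ) - 2) / n) * ℓ)) := by
  have hn2 : (0 : ℝ) < (n : ℝ) - 2 := by
    have : (3 : ℝ) ≤ (n : ℝ) := by exact_mod_cast hn
    linarith
  have hnpos : (0 : ℝ) < (n : ℝ) := by linarith
  set r₀ := Real.sqrt (((n : ℝ) - 2) / n) * ℓ with hr₀def
  have hr₀pos : 0 < r₀ := mul_pos (Real.sqrt_pos.2 (div_pos hn2 hnpos)) hℓ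
  have hr₀sq : r₀ ^ 2 = ((n : ℝ) - 2) / n * ℓ ^ 2 := by
    rw [hr₀def, mul_pow, Real.sq_sqrt (le_of_lt (div_pos hn2 hnpos))]
  have hkey := gB_max n hn ℓ hℓ
  rw [← hr₀def] at hkey
  have hkeyle : ∀ r : ℝ, 0 < r → gB n ℓ r ≤ gB n ℓ r₀ := by
    intro r hr
    by_cases h : r = r₀
    · rw [h]
    · exact (hkey r hr h).le
  -- split of r^n
  have hsplit : ∀ r : ℝ, r ^ n = r ^ (n - 2) * r ^ 2 := by
    intro r
    rw [← pow_add]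
    congr 1
    omega
  -- value of g at r₀
  have hg0 : gB n ℓ r₀ = 2 * (r₀ ^ n / (((n : ℝ) - 2) * ℓ ^ 2)) := by
    unfold gB
    rw [hsplit r₀, hr₀sq]
    field_simp
    ring
  -- translation: for r > 0 and β = 1
  have htrans : ∀ r : ℝ, 0 < r →
      (1 - 2 * m / r ^ (n - 2) - r ^ 2 / ℓ ^ 2) * r ^ (n - 2) = gB n ℓ r - 2 * m := by
    intro r hr
    have hrp : (0 : ℝ) < r ^ (n - 2) := pow_pos hr _
    unfold gB
    rw [hsplit r]
    field_simp
    ring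
  have hzero : ∀ r : ℝ, 0 < r →
      ((1 - 2 * m / r ^ (n - 2) - r ^ 2 / ℓ ^ 2 = 0) ↔ gB n ℓ r = 2 * m) := by
    intro r hr
    have hrp : (0 : ℝ) < r ^ (n - 2) := pow_pos hr _
    have ht := htrans r hr
    constructor
    · intro h; rw [h] at ht; linarith
    · intro h
      have ht2 : (1 - 2 * m / r ^ (n - 2) - r ^ 2 / ℓ ^ 2) * r ^ (n - 2) = 0 := by
        rw [h] at ht; linarith
      rcases mul_eq_zero.1 ht2 with h' | h'
      · exact h'
      · exact absurd h' (ne_of_gt hrp)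
  have hle : ∀ r : ℝ, 0 < r →
      ((1 - 2 * m / r ^ (n - 2) - r ^ 2 / ℓ ^ 2 ≤ 0) ↔ gB n ℓ r ≤ 2 * m) := by
    intro r hr
    have hrp : (0 : ℝ) < r ^ (n - 2) := pow_pos hr _
    have ht := htrans r hr
    constructor
    · intro h; nlinarith
    · intro h
      by_contra hc
      push_neg at hc
      nlinarith
  -- m formula iff 2m = g r₀
  have hmiff : (m = r₀ ^ n / (((n : ℝ) - 2) * ℓ ^ 2)) ↔ gB n ℓ r₀ = 2 * m := by
    rw [hg0]
    constructor <;> intro h <;> linarith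
  constructor
  · constructor
    · rintro ⟨hF, r', ⟨hr'pos, hr'zero⟩, _⟩
      -- first rule out β = 0 and β = -1
      have hβ1 : β = 1 := by
        rcases hβ with hb | hb | hb
        · -- β = 0
          subst hb
          exfalso
          rcases le_or_gt 0 m with hm | hm
          · -- f < 0 everywhere, contradicts zero
            have h1 : (0:ℝ) ≤ 2 * m / r' ^ (n - 2) := by positivity
            have h2 : (0:ℝ) < r' ^ 2 / ℓ ^ 2 := by positivity
            linarith
          · -- m < 0 : f positive for small r
            set c : ℝ := 1 + 1 / ℓ ^ 2 with hc
            have hcpos : 0 < c := by positivity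
            set r := min 1 (-m / c) with hrdef
            have hrpos : 0 < r := lt_min one_pos (div_pos (by linarith) hcpos)
            have hr1 : r ≤ 1 := min_le_left _ _
            have hr2 : r ≤ -m / c := min_le_right _ _
            have hrpow : 0 < r ^ (n - 2) := pow_pos hrpos _
            have hrppow : r ^ (n - 2) ≤ r := by
              calc r ^ (n - 2) ≤ r ^ 1 := pow_le_pow_of_le_one hrpos.le hr1 (by omega)
              _ = r := pow_one r
            have h3 : (-(2*m)) / r ≤ (-(2*m)) / r ^ (n - 2) :=
              div_le_div_of_nonneg_left (by linarith) hrpow hrppow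
            have h4 : 2 * c ≤ (-(2*m)) / r := by
              rw [le_div_iff₀ hrpos]
              have : c * r ≤ -m := by
                rw [← le_div_iff₀' hcpos]
                exact hr2
              linarith
            have h5 : r ^ 2 / ℓ ^ 2 ≤ 1 / ℓ ^ 2 := by
              apply div_le_div_of_nonneg_right _ (by positivity)
              · nlinarith
            have h6 : -(2 * m / r ^ (n - 2)) = (-(2*m)) / r ^ (n - 2) := by ring
            have := hF r hrpos
            rw [hc] at h4
            have hl2 : (0:ℝ) < 1 / ℓ ^ 2 := by positivity
            linarith
        · exact hb
        · -- β = -1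
          subst hb
          exfalso
          rcases le_or_gt 0 m with hm | hm
          · have h1 : (0:ℝ) ≤ 2 * m / r' ^ (n - 2) := by positivity
            have h2 : (0:ℝ) < r' ^ 2 / ℓ ^ 2 := by positivity
            linarith
          · set c : ℝ := 1 + 1 / ℓ ^ 2 with hc
            have hcpos : 0 < c := by positivity
            set r := min 1 (-m / c) with hrdef
            have hrpos : 0 < r := lt_min one_pos (div_pos (by linarith) hcpos)
            have hr1 : r ≤ 1 := min_le_left _ _
            have hr2 : r ≤ -m / c := min_le_right _ _
            have hrpow : 0 < r ^ (n - 2) := pow_pos hrpos _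
            have hrppow : r ^ (n - 2) ≤ r := by
              calc r ^ (n - 2) ≤ r ^ 1 := pow_le_pow_of_le_one hrpos.le hr1 (by omega)
              _ = r := pow_one r
            have h3 : (-(2*m)) / r ≤ (-(2*m)) / r ^ (n - 2) :=
              div_le_div_of_nonneg_left (by linarith) hrpow hrppow
            have h4 : 2 * c ≤ (-(2*m)) / r := by
              rw [le_div_iff₀ hrpos]
              have : c * r ≤ -m := by
                rw [← le_div_iff₀' hcpos]
                exact hr2
              linarith
            have h5 : r ^ 2 / ℓ ^ 2 ≤ 1 / ℓ ^ 2 := by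
              apply div_le_div_of_nonneg_right _ (by positivity)
              · nlinarith
            have h6 : -(2 * m / r ^ (n - 2)) = (-(2*m)) / r ^ (n - 2) := by ring
            have := hF r hrpos
            rw [hc] at h4
            have hl2 : (0:ℝ) < 1 / ℓ ^ 2 := by positivity
            linarith
      subst hβ1
      refine ⟨rfl, ?_⟩
      rw [hmiff]
      have h1 : gB n ℓ r₀ ≤ 2 * m := (hle r₀ hr₀pos).1 (hF r₀ hr₀pos)
      have h2 : gB n ℓ r' = 2 * m := (hzero r' hr'pos).1 hr'zero
      have h3 : gB n ℓ r' ≤ gB n ℓ r₀ := hkeyle r' hr'pos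
      linarith
    · rintro ⟨hβ1, hm⟩
      subst hβ1
      have h2m : gB n ℓ r₀ = 2 * m := hmiff.1 hm
      constructor
      · intro r hr
        rw [hle r hr, ← h2m]
        exact hkeyle r hr
      · refine ⟨r₀, ⟨hr₀pos, (hzero r₀ hr₀pos).2 h2m⟩, ?_⟩
        rintro r ⟨hrpos, hrzero⟩
        by_contra hne
        have := hkey r hrpos hne
        rw [(hzero r hrpos).1 hrzero] at this
        linarith [h2m]
  · rintro ⟨hβ1, hm⟩ r hr
    subst hβ1
    have h2m : gB n ℓ r₀ = 2 * m := hmiff.1 hm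
    rw [hzero r hr]
    constructor
    · intro h
      by_contra hne
      have := hkey r hr hne
      rw [h] at this
      linarith
    · intro h
      rw [h, h2m]
end

section
/- Let n ≥ 3 be an integer, ℓ > 0, β ∈ ℝ, m ∈ ℝ, and let r : (a,b) → (0,∞) be a differentiable function satisfying f(r(x)) > 0 and r'(x) = r(x)·√(f(r(x))) for all x, where f(ρ) = β − 2m/ρ^{n−2} − ρ²/ℓ². Set φ(x) = r(x)^{(n−2)/2}. Then for every x ∈ (a,b) the first integral of the Yamabe equation takes the value ½ φ'(x)² − ((n−2)²β/8) φ(x)² + ((n−2)²/(8ℓ²)) φ(x)^{2n/(n−2)} = −((n−2)²/4)·m. In particular the mass parameter m is, up to the factor −(n−2)²/4, the constant of motion of the spherically-symmetric Yamabe equation. -/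
/-! Along the flow `r' = r √f(r)`, the field `φ = r^((n-2)/2)` satisfies
`φ' = ((n-2)/2) √f(r) φ`, so `½ φ'² = ((n-2)²/8) r^(n-2) f(r)`. Multiplying `f` by `r^(n-2)`
turns it into the polynomial `β r^(n-2) − 2m − r^n/ℓ²`, whose `β` and `ℓ` terms cancel the two
potential terms of the first integral and leave the constant `−((n−2)²/4) m`. -/

noncomputable def birminghamMetric (n : ℕ) (β m ℓ ρ : ℝ) : ℝ :=
  β - 2 * m / ρ ^ (n - 2) - ρ ^ 2 / ℓ ^ 2

theorem pow_sub_two_mul_birminghamMetric {n : ℕ} (hn : 2 ≤ n) {ρ : ℝ} (hρ : ρ ≠ 0)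
    (β m ℓ : ℝ) :
    ρ ^ (n - 2) * birminghamMetric n β m ℓ ρ = β * ρ ^ (n - 2) - 2 * m - ρ ^ n / ℓ ^ 2 := by
  have hsplit : ρ ^ n = ρ ^ (n - 2) * ρ ^ 2 := by rw [← pow_add, Nat.sub_add_cancel hn]
  have hpow : ρ ^ (n - 2) ≠ 0 := pow_ne_zero _ hρ
  rw [birminghamMetric, hsplit]
  field_simp

theorem HasDerivAt.rpow_const_of_eq_mul_self {r : ℝ → ℝ} {g x : ℝ}
    (hr : HasDerivAt r (r x * g) x) (hx : r x ≠ 0) (c : ℝ) :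
    HasDerivAt (fun y => r y ^ c) (c * g * r x ^ c) x := by
  convert hr.rpow_const (p := c) (Or.inl hx) using 1
  rw [Real.rpow_sub_one hx]
  field_simp

namespace Real

theorem rpow_div_two_sq {ρ : ℝ} (hρ : 0 ≤ ρ) (s : ℝ) : (ρ ^ (s / 2)) ^ 2 = ρ ^ s := by
  rw [← rpow_natCast, ← rpow_mul hρ]
  norm_num

theorem rpow_div_two_rpow_two_mul_div {ρ s : ℝ} (hρ : 0 ≤ ρ) (hs : s ≠ 0) (t : ℝ) :
    (ρ ^ (s / 2)) ^ (2 * t / s) = ρ ^ t := by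
  rw [← rpow_mul hρ]
  congr 1
  field_simp

end Real

theorem birmingham_yamabe_constant_of_motion_general (n : ℕ) (hn : 3 ≤ n)
    (ℓ β m a b : ℝ) (r : ℝ → ℝ)
    (hpos : ∀ x ∈ Set.Ioo a b, 0 < r x)
    (hf : ∀ x ∈ Set.Ioo a b, 0 < β - 2 * m / (r x) ^ (n - 2) - (r x) ^ 2 / ℓ ^ 2)
    (hder : ∀ x ∈ Set.Ioo a b,
      HasDerivAt r (r x * Real.sqrt (β - 2 * m / (r x) ^ (n - 2) - (r x) ^ 2 / ℓ ^ 2)) x) :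
    ∀ x ∈ Set.Ioo a b,
      (1 / 2) * (deriv (fun x => (r x) ^ (((n : ℝ) - 2) / 2)) x) ^ 2
        - (((n : ℝ) - 2) ^ 2 * β / 8) * ((r x) ^ (((n : ℝ) - 2) / 2)) ^ 2
        + (((n : ℝ) - 2) ^ 2 / (8 * ℓ ^ 2))
          * ((r x) ^ (((n : ℝ) - 2) / 2)) ^ ((2 * (n : ℝ)) / ((n : ℝ) - 2))
      = -(((n : ℝ) - 2) ^ 2 / 4) * m := by
  intro x hx
  have hρ := hpos x hx
  have hn2 : ((n - 2 : ℕ) : ℝ) = (n : ℝ) - 2 := by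
    rw [Nat.cast_sub (by omega), Nat.cast_ofNat]
  have hs : (n : ℝ) - 2 ≠ 0 := by
    rw [← hn2]; exact_mod_cast (by omega : n - 2 ≠ 0)
  have hφ' := (hder x hx).rpow_const_of_eq_mul_self hρ.ne' (((n : ℝ) - 2) / 2)
  have hφ_sq : (r x ^ (((n : ℝ) - 2) / 2)) ^ 2 = r x ^ (n - 2) := by
    rw [Real.rpow_div_two_sq hρ.le, ← hn2, Real.rpow_natCast]
  have hφ_pow : (r x ^ (((n : ℝ) - 2) / 2)) ^ (2 * (n : ℝ) / ((n : ℝ) - 2)) = r x ^ n := by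
    rw [Real.rpow_div_two_rpow_two_mul_div hρ.le hs, Real.rpow_natCast]
  have hkey := pow_sub_two_mul_birminghamMetric (n := n) (by omega) hρ.ne' β m ℓ
  rw [birminghamMetric] at hkey
  rw [hφ'.deriv, mul_pow, mul_pow, Real.sq_sqrt (hf x hx).le, hφ_sq, hφ_pow]
  linear_combination (((n : ℝ) - 2) ^ 2 / 8) * hkey

/-- The mass parameter `m` is (up to the factor `−(n−2)²/4`) the constant of
motion of the spherically-symmetric Yamabe equation: under `r' = r·√(f(r))` with
`f(ρ) = β − 2m/ρ^(n−2) − ρ²/ℓ²` and `φ = r^((n−2)/2)`, one has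
`½ φ'² − ((n−2)²β/8) φ² + ((n−2)²/(8ℓ²)) φ^(2n/(n−2)) = −((n−2)²/4)·m`. -/
theorem birmingham_yamabe_constant_of_motion (n : ℕ) (hn : 3 ≤ n)
    (ℓ β m a b : ℝ) (hℓ : 0 < ℓ) (r : ℝ → ℝ)
    (hpos : ∀ x ∈ Set.Ioo a b, 0 < r x)
    (hf : ∀ x ∈ Set.Ioo a b, 0 < β - 2 * m / (r x) ^ (n - 2) - (r x) ^ 2 / ℓ ^ 2)
    (hder : ∀ x ∈ Set.Ioo a b,
      HasDerivAt r (r x * Real.sqrt (β - 2 * m / (r x) ^ (n - 2) - (r x) ^ 2 / ℓ ^ 2)) x) :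
    ∀ x ∈ Set.Ioo a b,
      (1 / 2) * (deriv (fun x => (r x) ^ (((n : ℝ) - 2) / 2)) x) ^ 2
        - (((n : ℝ) - 2) ^ 2 * β / 8) * ((r x) ^ (((n : ℝ) - 2) / 2)) ^ 2
        + (((n : ℝ) - 2) ^ 2 / (8 * ℓ ^ 2))
          * ((r x) ^ (((n : ℝ) - 2) / 2)) ^ ((2 * (n : ℝ)) / ((n : ℝ) - 2))
      = -(((n : ℝ) - 2) ^ 2 / 4) * m :=
  birmingham_yamabe_constant_of_motion_general n hn ℓ β m a b r hpos hf hder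
end
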